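/- arXiv:math-ph/0505021 — 4 statements merged into one kernel-verified Lean document; each statement's English description precedes it below -/
import Mathlib

section
/- For any partition λ with Frobenius coordinates (p_1,…,p_d | q_1,…,q_d), the Schur function satisfies the Giambelli formula: s_λ = det[ s_{(p_i | q_j)} ]_{i,j=1}^d, where s_{(p|q)} denotes the Schur function of the hook partition (p+1, 1^q). -/
/-!
Let `H = (h_{μ_i - i + j})` be the Jacobi–Trudi matrix of size `k ≥ ℓ(μ)` and
`E = ((-1)^{j-t} e_{j-t})` the inverse of `(h_{j-t})`. The `(i, j)` entry of `H E` is the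
truncated sum `∑_{u ≤ j} (-1)^u e_u h_{μ_i - i + j - u}`, which is `δ_{μ_i - i + j, 0}` as soon as
`μ_i ≤ i`, i.e. in every row `i ≥ d`. These rows are unit vectors in the columns `i - μ_i`, and
the remaining columns are exactly the `q_j = μ'_j - j - 1`, `j < d`; so up to sign `det (H E)` is
the `d × d` minor on the rows `i < d` and the columns `q_j`. The same computation for a hook
(`d = 1`) identifies the entries of this minor as `(-1)^{q_j} s_{(p_i | q_j)}`, and these signs
cancel the sign of the column permutation.
-/

noncomputable section

/-- The ring of symmetric functions, realized as the polynomial ring in the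
complete homogeneous symmetric functions `h₁, h₂, …`. -/
abbrev SymFn : Type := MvPolynomial ℕ ℚ

/-- The complete homogeneous symmetric function `h_k` (with the conventions
`h_0 = 1` and `h_k = 0` for `k < 0`). -/
def hh (k : ℤ) : SymFn :=
  if k < 0 then 0 else if k = 0 then 1 else MvPolynomial.X k.toNat

/-- The Schur function `s_μ`, defined through the Jacobi–Trudi formula
`s_μ = det [h_{μ_i - i + j}]_{i,j=1}^k`, where `k` is any number `≥ ℓ(μ)`
(here `μ` is 0-indexed: `μ 0, μ 1, …` are the parts). -/
def schur (μ : ℕ → ℕ) (k : ℕ) : SymFn :=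
  Matrix.det (Matrix.of fun i j : Fin k => hh ((μ i : ℤ) - (i : ℤ) + (j : ℤ)))

/-- The hook partition `(p|q) = (p+1, 1^q)` (0-indexed parts). -/
def hookP (p q : ℕ) : ℕ → ℕ := fun i => if i = 0 then p + 1 else if i ≤ q then 1 else 0

/-- The conjugate (transposed) partition: `μ'_i = #{j : μ_j > i}` (0-indexed). -/
def conjP (μ : ℕ → ℕ) (i : ℕ) : ℕ := Nat.card {j : ℕ // i < μ j}

open Finset Equiv Matrix

namespace Matrix

variable {R : Type*} [CommRing R]

theorem det_eq_det_submatrix_castLE_of_row_eq_single {n d : ℕ} (hd : d ≤ n)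
    (N : Matrix (Fin n) (Fin n) R) (hN : ∀ i : Fin n, d ≤ (i : ℕ) → N i = Pi.single i 1) :
    N.det = (N.submatrix (Fin.castLE hd) (Fin.castLE hd)).det := by
  induction n with
  | zero =>
    obtain rfl : d = 0 := by omega
    rw [det_isEmpty, det_isEmpty]
  | succ n ih =>
    rcases hd.eq_or_lt with rfl | hlt
    · simp
    have hlast : N (Fin.last n) = Pi.single (Fin.last n) 1 := hN _ (by rw [Fin.val_last]; omega)
    rw [det_succ_row N (Fin.last n), Fintype.sum_eq_single (Fin.last n) fun j hj => by
      simp [hlast, hj]]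
    rw [ih (by omega) _ fun i hi => ?_]
    · simp only [hlast, Pi.single_eq_same, Fin.succAbove_last, Fin.val_last, ← two_mul,
        Even.neg_one_pow (even_two_mul n), one_mul]
      rfl
    · ext j
      simp [hN i.castSucc (by simpa using hi), Pi.single_apply]

theorem sign_mul_det_eq_det_submatrix {n d : ℕ} (hd : d ≤ n) (M : Matrix (Fin n) (Fin n) R)
    (σ : Perm (Fin n)) (hM : ∀ i : Fin n, d ≤ (i : ℕ) → M i = Pi.single (σ i) 1) :
    Perm.sign σ * M.det = (M.submatrix (Fin.castLE hd) (σ ∘ Fin.castLE hd)).det := by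
  rw [← det_permute', det_eq_det_submatrix_castLE_of_row_eq_single hd _ fun i hi => ?_]
  · rfl
  · ext j
    simp [hM i hi, Pi.single_apply, σ.injective.eq_iff]

end Matrix

theorem Fin.strictMonoOn_cycleRange {n : ℕ} (c : Fin n) : StrictMonoOn (cycleRange c) {c}ᶜ := by
  intro x hx y hy hxy
  rcases lt_or_gt_of_ne hx with hxc | hcx <;> rcases lt_or_gt_of_ne hy with hyc | hcy
  · rw [Fin.lt_def, coe_cycleRange_of_lt hxc, coe_cycleRange_of_lt hyc]
    exact Nat.succ_lt_succ hxy
  · rw [Fin.lt_def, coe_cycleRange_of_lt hxc, cycleRange_of_gt hcy]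
    exact Nat.lt_of_le_of_lt hxc hcy
  · exact absurd (hyc.trans (hcx.trans hxy)) (lt_irrefl _)
  · rwa [cycleRange_of_gt hcx, cycleRange_of_gt hcy]

theorem Equiv.Perm.sign_eq_neg_one_pow_sum_of_strictAntiOn_of_strictMonoOn {n d : ℕ}
    (hd : d ≤ n) (π : Perm (Fin n)) (hanti : StrictAntiOn π {i | (i : ℕ) < d})
    (hmono : StrictMonoOn π {i | d ≤ (i : ℕ)}) :
    sign π = (-1) ^ ∑ j : Fin d, (π (Fin.castLE hd j) : ℕ) := by
  induction d generalizing n with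
  | zero =>
    have hπ : StrictMono π := fun i j h => hmono (by simp) (by simp) h
    have : π = 1 := Equiv.ext <| congrFun <| (hπ.range_inj strictMono_id).mp (by simp)
    simp [this]
  | succ d ih =>
    obtain ⟨m, rfl⟩ : ∃ m, n = m + 1 := ⟨n - 1, by omega⟩
    -- `cycleRange c` sends the largest value `c` of the decreasing block to `0` and keeps the
    -- relative order of all other values, so `π` reduces to a permutation `e` of the same shape.
    set c := π 0
    obtain ⟨⟨p, e⟩, hτ⟩ := decomposeFin.symm.surjective (Fin.cycleRange c * π)
    obtain rfl : p = 0 := by simpa [c] using congr($hτ 0)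
    have hsucc (x : Fin m) : (e x).succ = Fin.cycleRange c (π x.succ) := by
      simpa using congr($hτ x.succ)
    have hsign : sign π = (-1) ^ (c : ℕ) * sign e := by
      have : π = (Fin.cycleRange c)⁻¹ * decomposeFin.symm (0, e) := by rw [hτ]; group
      rw [this, map_mul, map_inv, Fin.sign_cycleRange, decomposeFin.symm_sign]
      simp
    have hne (x : Fin m) : π x.succ ∈ ({c}ᶜ : Set (Fin (m + 1))) := fun h =>
      Fin.succ_ne_zero x (π.injective h)
    have he_lt {x y : Fin m} (h : π x.succ < π y.succ) : e x < e y := by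
      rw [← Fin.succ_lt_succ_iff, hsucc, hsucc]
      exact Fin.strictMonoOn_cycleRange c (hne x) (hne y) h
    have he (x : Fin m) (hx : (x : ℕ) < d) : (e x : ℕ) = π x.succ := by
      have hlt : π x.succ < c := hanti (by simp) (by simpa using hx) (Fin.succ_pos x)
      have := congrArg Fin.val (hsucc x)
      rw [Fin.val_succ, Fin.coe_cycleRange_of_lt hlt] at this
      omega
    rw [hsign, ih (by omega) e (fun x hx y hy h => he_lt (hanti ?_ ?_ (Fin.succ_lt_succ_iff.mpr h)))
      (fun x hx y hy h => he_lt (hmono ?_ ?_ (Fin.succ_lt_succ_iff.mpr h))), Fin.sum_univ_succ,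
      pow_add]
    · congr 2
      refine Finset.sum_congr rfl fun j _ => ?_
      rw [he _ (by simp)]
      rfl
    all_goals simp only [Set.mem_ofPred_eq, Fin.val_succ] at hx hy ⊢; omega

theorem hh_of_neg {k : ℤ} (hk : k < 0) : hh k = 0 := if_pos hk

theorem hh_zero : hh 0 = 1 := by simp [hh]

/-- The elementary symmetric functions, defined through the relations
`∑_{u ≤ m} (-1)^u e_u h_{m-u} = 0` for `m > 0`. -/
def ee : ℕ → SymFn
  | 0 => 1
  | m + 1 => (-1) ^ m * ∑ u : Fin (m + 1), (-1) ^ (u : ℕ) * ee u * hh (m + 1 - u)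

theorem ee_zero : ee 0 = 1 := by simp [ee]

theorem ee_succ (m : ℕ) :
    ee (m + 1) = (-1) ^ m * ∑ u ∈ range (m + 1), (-1) ^ u * ee u * hh (m + 1 - u) := by
  rw [ee, Fin.sum_univ_eq_sum_range (fun u => (-1) ^ u * ee u * hh (m + 1 - u))]

theorem sum_range_neg_one_pow_mul_ee_mul_hh (m : ℕ) :
    ∑ u ∈ range (m + 1), (-1) ^ u * ee u * hh (m - u) = if m = 0 then 1 else 0 := by
  cases m with
  | zero => simp [ee_zero, hh_zero]
  | succ m =>
    have hsign : ((-1) ^ (m + 1) * (-1) ^ m : SymFn) = -1 := by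
      rw [← pow_add]; exact Odd.neg_one_pow ⟨m, by ring⟩
    rw [sum_range_succ, ee_succ, sub_self, hh_zero]
    push_cast
    linear_combination (∑ u ∈ range (m + 1), (-1) ^ u * ee u * hh (m + 1 - u)) * hsign

def ehSum (A : ℤ) (c : ℕ) : SymFn :=
  ∑ u ∈ range (c + 1), (-1) ^ u * ee u * hh (A - u)

theorem ehSum_of_le {A : ℤ} {c : ℕ} (h : A ≤ c) : ehSum A c = if A = 0 then 1 else 0 := by
  rcases lt_or_ge A 0 with hA | hA
  · rw [if_neg hA.ne, ehSum]
    exact sum_eq_zero fun u _ => by rw [hh_of_neg (by omega), mul_zero]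
  lift A to ℕ using hA
  rw [ehSum, ← sum_range_add_sum_Ico _ (by omega : A + 1 ≤ c + 1),
    sum_range_neg_one_pow_mul_ee_mul_hh, sum_eq_zero fun u hu => ?_]
  · simp
  · rw [hh_of_neg (by simp at hu; omega), mul_zero]

/-- The inverse of the unitriangular matrix `(h_{j-t})`. -/
def eMatrix (n : ℕ) : Matrix (Fin n) (Fin n) SymFn :=
  of fun t j => if t ≤ j then (-1) ^ ((j : ℕ) - t) * ee (j - t) else 0

theorem det_eMatrix (n : ℕ) : (eMatrix n).det = 1 := by
  rw [det_of_isUpperTriangular (M := eMatrix n) fun i j h => if_neg (not_le.mpr h)]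
  exact prod_eq_one fun t _ => by simp [eMatrix, ee_zero]

def jacobiTrudi (μ : ℕ → ℕ) (n : ℕ) : Matrix (Fin n) (Fin n) SymFn :=
  of fun i j => hh ((μ i : ℤ) - i + j)

theorem schur_eq_det_jacobiTrudi (μ : ℕ → ℕ) (n : ℕ) : schur μ n = (jacobiTrudi μ n).det := rfl

theorem jacobiTrudi_mul_eMatrix_apply (μ : ℕ → ℕ) {n : ℕ} (i j : Fin n) :
    (jacobiTrudi μ n * eMatrix n) i j = ehSum ((μ i : ℤ) - i + j) j := by
  simp only [mul_apply, jacobiTrudi, eMatrix, of_apply, mul_ite, mul_zero, ehSum]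
  rw [← sum_filter]
  refine sum_bij' (fun t _ => (j - t : ℕ)) (fun u _ => ⟨j - u, by omega⟩) ?_ ?_ ?_ ?_
    fun t ht => by
      rw [Nat.cast_sub (mem_filter.mp ht).2, mul_comm,
        show (μ i : ℤ) - i + j - (j - t) = μ i - i + t by ring]
  all_goals
    intro x hx
    simp only [mem_filter, mem_univ, true_and, Fin.le_def, mem_range, Fin.ext_iff] at hx ⊢
    omega

theorem sign_mul_schur_eq_det {μ : ℕ → ℕ} {n d : ℕ} (hd : d ≤ n) (σ : Perm (Fin n))
    (hσ : ∀ i : Fin n, d ≤ (i : ℕ) → μ i ≤ i ∧ (σ i : ℕ) = i - μ i) :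
    Perm.sign σ * schur μ n = (of fun i j : Fin d =>
      ehSum ((μ i : ℤ) - i + σ (Fin.castLE hd j)) (σ (Fin.castLE hd j))).det := by
  rw [schur_eq_det_jacobiTrudi, ← mul_one (jacobiTrudi μ n).det, ← det_eMatrix, ← det_mul,
    sign_mul_det_eq_det_submatrix hd _ σ fun i hi => ?_]
  · congr 1
    ext i j
    simp [jacobiTrudi_mul_eMatrix_apply]
  · obtain ⟨hμi, hσi⟩ := hσ i hi
    funext j
    rw [jacobiTrudi_mul_eMatrix_apply, ehSum_of_le (by omega), Pi.single_apply]
    exact if_congr (by rw [Fin.ext_iff, hσi]; omega) rfl rfl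

theorem ehSum_hook (p c : ℕ) : ehSum (p + 1 + c) c = (-1) ^ c * schur (hookP p c) (c + 1) := by
  have h := sign_mul_schur_eq_det (μ := hookP p c) (d := 1) (by omega) (finRotate (c + 1)).symm
    fun i hi => ?_
  · rw [det_unique, Perm.sign_symm, sign_finRotate] at h
    simpa [hookP] using h.symm
  · have hi0 : i ≠ 0 := by rintro rfl; simp at hi
    have hhook : hookP p c i = 1 := by
      simp only [hookP, Fin.val_eq_zero_iff, hi0, if_false, if_pos (Nat.le_of_lt_succ i.2)]
    rw [coe_finRotate_symm_of_ne_zero hi0, hhook]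
    omega

section Frobenius

variable {μ : ℕ → ℕ} {k d : ℕ}

theorem lt_conjP_iff (hμ : Antitone μ) (hk : ∀ i, k ≤ i → μ i = 0) (i j : ℕ) :
    i < conjP μ j ↔ j < μ i := by
  have hex : ∃ t, μ t ≤ j := ⟨k, by rw [hk k le_rfl]; exact Nat.zero_le j⟩
  have hset : {t | j < μ t} = Set.Iio (Nat.find hex) := by
    ext t
    simp only [Set.mem_ofPred_eq, Set.mem_Iio, Nat.lt_find_iff, not_le]
    exact ⟨fun h s hs => h.trans_le (hμ hs), fun h => h t le_rfl⟩
  have hconj : conjP μ j = Nat.find hex := by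
    rw [conjP, ← Set.coe_ofPred, Nat.card_coe_set_eq, hset, Set.ncard_Iio_nat]
  rw [hconj, ← Set.mem_Iio, ← hset, Set.mem_ofPred_eq]

theorem conjP_le (hμ : Antitone μ) (hk : ∀ i, k ≤ i → μ i = 0) (j : ℕ) : conjP μ j ≤ k :=
  not_lt.mp fun h => by simpa [hk k le_rfl] using (lt_conjP_iff hμ hk k j).mp h

theorem conjP_antitone (hμ : Antitone μ) (hk : ∀ i, k ≤ i → μ i = 0) : Antitone (conjP μ) :=
  fun _ _ hj => forall_lt_iff_le.mp fun i hi =>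
    (lt_conjP_iff hμ hk i _).mpr (hj.trans_lt ((lt_conjP_iff hμ hk i _).mp hi))

/-- Row `i ≥ d` of the Jacobi–Trudi matrix times `eMatrix` is the unit vector in column
`i - μ i`; the Frobenius coordinates `q_j = μ'_j - (j + 1)`, `j < d`, fill the other columns. -/
def giambelliCol (μ : ℕ → ℕ) (d i : ℕ) : ℕ :=
  if i < d then conjP μ i - (i + 1) else i - μ i

theorem giambelliCol_lt (hμ : Antitone μ) (hk : ∀ i, k ≤ i → μ i = 0)
    (hd : ∀ i, i < d ↔ i < μ i) {i : ℕ} (hi : i < k) : giambelliCol μ d i < k := by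
  have := conjP_le hμ hk i
  have := lt_conjP_iff hμ hk i i
  have := hd i
  unfold giambelliCol
  split_ifs <;> omega

theorem strictAntiOn_giambelliCol (hμ : Antitone μ) (hk : ∀ i, k ≤ i → μ i = 0)
    (hd : ∀ i, i < d ↔ i < μ i) : StrictAntiOn (giambelliCol μ d) (Set.Iio d) := by
  intro i (hi : i < d) j (hj : j < d) hij
  have := conjP_antitone hμ hk hij.le
  have := (lt_conjP_iff hμ hk j j).mpr ((hd j).mp hj)
  simp only [giambelliCol, if_pos hi, if_pos hj]
  omega

theorem strictMonoOn_giambelliCol (hμ : Antitone μ) (hd : ∀ i, i < d ↔ i < μ i) :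
    StrictMonoOn (giambelliCol μ d) (Set.Ici d) := by
  intro i (hi : d ≤ i) j (hj : d ≤ j) hij
  have := hμ hij.le
  have := hd i
  simp only [giambelliCol, if_neg (not_lt.mpr hi), if_neg (not_lt.mpr hj)]
  omega

theorem giambelliCol_injective (hμ : Antitone μ) (hk : ∀ i, k ≤ i → μ i = 0)
    (hd : ∀ i, i < d ↔ i < μ i) : (giambelliCol μ d).Injective := by
  have hne {j i : ℕ} (hj : j < d) (hi : d ≤ i) : giambelliCol μ d j ≠ giambelliCol μ d i := by
    have := lt_conjP_iff hμ hk i j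
    have := (lt_conjP_iff hμ hk j j).mpr ((hd j).mp hj)
    have := hd i
    simp only [giambelliCol, if_pos hj, if_neg (not_lt.mpr hi)]
    omega
  intro i j hij
  rcases lt_or_ge i d with hi | hi <;> rcases lt_or_ge j d with hj | hj
  · exact (strictAntiOn_giambelliCol hμ hk hd).injOn hi hj hij
  · exact absurd hij (hne hi hj)
  · exact absurd hij.symm (hne hj hi)
  · exact (strictMonoOn_giambelliCol hμ hd).injOn hi hj hij

theorem durfee_le (hk : ∀ i, k ≤ i → μ i = 0) (hd : ∀ i, i < d ↔ i < μ i) : d ≤ k :=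
  not_lt.mp fun h => by simpa [hk k le_rfl] using (hd k).mp h

def giambelliPerm (hμ : Antitone μ) (hk : ∀ i, k ≤ i → μ i = 0) (hd : ∀ i, i < d ↔ i < μ i) :
    Perm (Fin k) :=
  Equiv.ofBijective (fun i => ⟨giambelliCol μ d i, giambelliCol_lt hμ hk hd i.2⟩)
    (Finite.injective_iff_bijective.mp fun _ _ h =>
      Fin.ext (giambelliCol_injective hμ hk hd (Fin.mk.inj_iff.mp h)))

theorem coe_giambelliPerm_apply (hμ : Antitone μ) (hk : ∀ i, k ≤ i → μ i = 0)
    (hd : ∀ i, i < d ↔ i < μ i) (i : Fin k) :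
    (giambelliPerm hμ hk hd i : ℕ) = giambelliCol μ d i := rfl

theorem sign_giambelliPerm (hμ : Antitone μ) (hk : ∀ i, k ≤ i → μ i = 0)
    (hd : ∀ i, i < d ↔ i < μ i) :
    Perm.sign (giambelliPerm hμ hk hd) = (-1) ^ ∑ j : Fin d, (conjP μ j - (j + 1)) := by
  rw [Perm.sign_eq_neg_one_pow_sum_of_strictAntiOn_of_strictMonoOn (durfee_le hk hd) _
    (fun i hi j hj h => strictAntiOn_giambelliCol hμ hk hd hi hj h)
    (fun i hi j hj h => strictMonoOn_giambelliCol hμ hd hi hj h)]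
  congr 1
  exact sum_congr rfl fun j _ => if_pos j.2

theorem ehSum_giambelliCol (hμ : Antitone μ) (hk : ∀ i, k ≤ i → μ i = 0)
    (hd : ∀ i, i < d ↔ i < μ i) {i j : ℕ} (hi : i < d) (hj : j < d) :
    ehSum ((μ i : ℤ) - i + giambelliCol μ d j) (giambelliCol μ d j) =
      (-1) ^ (conjP μ j - (j + 1)) *
        schur (hookP (μ i - (i + 1)) (conjP μ j - (j + 1))) (conjP μ j - j) := by
  have := (hd i).mp hi
  have := (lt_conjP_iff hμ hk j j).mpr ((hd j).mp hj)
  rw [giambelliCol, if_pos hj, show conjP μ j - j = conjP μ j - (j + 1) + 1 by omega,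
    ← ehSum_hook]
  congr 1
  omega

end Frobenius

/-- **Giambelli formula**: for any partition `μ` with Frobenius coordinates
`(p_1,…,p_d | q_1,…,q_d)` (0-indexed: `p i = μ i - (i+1)`, `q j = μ' j - (j+1)`
for `i, j < d`, where `d` is the number of diagonal boxes),
`s_μ = det [ s_{(p_i | q_j)} ]_{i,j=1}^d`. -/
theorem giambelli_schur (μ : ℕ → ℕ) (hμ : Antitone μ)
    (k : ℕ) (hk : ∀ i, k ≤ i → μ i = 0)
    (d : ℕ) (hd : ∀ i, i < d ↔ i < μ i) :
    schur μ k =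
      Matrix.det (Matrix.of fun i j : Fin d =>
        schur (hookP (μ i - (i + 1)) (conjP μ j - (j + 1))) (conjP μ (j : ℕ) - (j : ℕ))) := by
  have hminor := sign_mul_schur_eq_det (durfee_le hk hd) (giambelliPerm hμ hk hd) fun i hi =>
    ⟨by have := hd i; omega, if_neg (not_lt.mpr hi)⟩
  simp only [coe_giambelliPerm_apply, Fin.val_castLE, ehSum_giambelliCol hμ hk hd, Fin.is_lt]
    at hminor
  erw [det_mul_row] at hminor
  rw [prod_pow_eq_pow_sum, sign_giambelliPerm] at hminor
  push_cast at hminor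
  exact mul_left_cancel₀ (pow_ne_zero _ (neg_ne_zero.mpr one_ne_zero)) hminor
end
end

section
/- Let ⟨·⟩ : Λ → ℂ be linear with ⟨1⟩ = 1, and suppose that for two d×d matrices A, B of elements where B has scalar (constant) entries, ⟨det A_{IJ}⟩ = det⟨A_{IJ}⟩ holds for every pair of equal-size subsets I, J ⊆ {1,…,d} (where A_{IJ} is the submatrix of A with rows I and columns J, and ⟨·⟩ is applied entrywise). Then ⟨det(A+B)⟩ = det⟨A+B⟩. -/
/-!
Expanding the determinant multilinearly in the rows, `det (A + B)` is the sum over row sets `s`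
of the determinants of the matrices taking the rows in `s` from `A` and the others from `B`.
In such a matrix every row outside `s` is scalar, and `⟨·⟩` pulls scalars out of products, so
Laplace expansion along a scalar row reduces `⟨det⟩ = det ⟨·⟩` to the same identity for its
minors; by induction only minors with all rows in `s` remain, i.e. minors of `A`.
-/

open Matrix Finset

namespace Matrix

theorem det_add_eq_sum_det_piecewise {n R : Type*} [Fintype n] [DecidableEq n] [CommRing R]
    (A B : Matrix n n R) :
    (A + B).det = ∑ s : Finset n, (of (s.piecewise A B)).det :=
  (detRowAlternating (R := R) (n := n)).toMultilinearMap.map_add_univ A B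

variable {K R : Type*} [CommRing K] [CommRing R] [Algebra K R] {φ : R →ₗ[K] K}

theorem map_det_eq_det_map_of_scalar_row (hφ1 : φ 1 = 1) {n : ℕ}
    (M : Matrix (Fin (n + 1)) (Fin (n + 1)) R) (i : Fin (n + 1))
    (hi : ∀ j, M i j ∈ Set.range (algebraMap K R))
    (hminors : ∀ j : Fin (n + 1), φ (M.submatrix i.succAbove j.succAbove).det =
      ((M.submatrix i.succAbove j.succAbove).map φ).det) :
    φ M.det = (M.map φ).det := by
  rw [det_succ_row M i, map_sum, det_succ_row (M.map φ) i]
  refine sum_congr rfl fun j _ => ?_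
  obtain ⟨b, hb⟩ := hi j
  have hφb : φ (algebraMap K R b) = b := by
    rw [Algebra.algebraMap_eq_smul_one, map_smul, hφ1, smul_eq_mul, mul_one]
  calc φ ((-1) ^ (i + j : ℕ) * M i j * (M.submatrix i.succAbove j.succAbove).det)
      = φ (((-1) ^ (i + j : ℕ) * b) • (M.submatrix i.succAbove j.succAbove).det) := by
        rw [Algebra.smul_def, ← hb]; push_cast; ring_nf
    _ = (-1) ^ (i + j : ℕ) * (M.map φ) i j *
          ((M.map φ).submatrix i.succAbove j.succAbove).det := by
        rw [map_smul, smul_eq_mul, hminors, submatrix_map, map_apply, ← hb, hφb]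

theorem map_det_eq_det_map_of_scalar_rows_compl (hφ1 : φ 1 = 1) {n : ℕ}
    (M : Matrix (Fin n) (Fin n) R) (S : Set (Fin n))
    (hscalar : ∀ i ∉ S, ∀ j, M i j ∈ Set.range (algebraMap K R))
    (hminors : ∀ (m : ℕ) (r c : Fin m → Fin n), StrictMono r → StrictMono c →
      (∀ k, r k ∈ S) → φ (M.submatrix r c).det = ((M.submatrix r c).map φ).det) :
    φ M.det = (M.map φ).det := by
  induction n with
  | zero => simp [hφ1]
  | succ n ih =>
    by_cases hS : ∀ i, i ∈ S
    · simpa using hminors (n + 1) id id strictMono_id strictMono_id hS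
    obtain ⟨i, hi⟩ := not_forall.mp hS
    refine map_det_eq_det_map_of_scalar_row hφ1 M i (hscalar i hi) fun j => ?_
    refine ih _ (i.succAbove ⁻¹' S) (fun k hk l => hscalar _ hk _) fun m r c hr hc hrS => ?_
    rw [submatrix_submatrix]
    exact hminors m _ _ ((Fin.strictMono_succAbove i).comp hr)
      ((Fin.strictMono_succAbove j).comp hc) hrS

end Matrix

theorem det_average_add_scalar_matrix
    {R : Type*} [CommRing R] [Algebra ℂ R]
    (φ : R →ₗ[ℂ] ℂ) (hφ1 : φ 1 = 1)
    (d : ℕ) (A : Matrix (Fin d) (Fin d) R) (B : Matrix (Fin d) (Fin d) ℂ)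
    (hminors : ∀ (m : ℕ) (r c : Fin m → Fin d), StrictMono r → StrictMono c →
      φ (Matrix.det (A.submatrix r c)) = Matrix.det ((A.submatrix r c).map φ)) :
    φ (Matrix.det (A + B.map (algebraMap ℂ R))) =
      Matrix.det ((A + B.map (algebraMap ℂ R)).map φ) := by
  set B' := B.map (algebraMap ℂ R)
  rw [Matrix.map_add φ (map_add φ), det_add_eq_sum_det_piecewise, map_sum,
    det_add_eq_sum_det_piecewise]
  refine sum_congr rfl fun s _ => ?_
  have hmap : (of (s.piecewise A B')).map φ = of (s.piecewise (A.map φ) (B'.map φ)) := by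
    ext i j
    by_cases h : i ∈ s <;> simp [Finset.piecewise, h]
  rw [← hmap]
  refine map_det_eq_det_map_of_scalar_rows_compl hφ1 _ s (fun i hi j => ⟨B i j, ?_⟩)
    fun m r c hr hc hrs => ?_
  · simp [Finset.piecewise, mem_coe.not.mp hi, B']
  · have hsub : (of (s.piecewise A B')).submatrix r c = A.submatrix r c := by
      ext k l
      simp [Finset.piecewise, mem_coe.mp (hrs k)]
    rw [hsub]
    exact hminors m r c hr hc
end

section
/- Estimate for products: Fix ε > 0 and let u ∈ ℂ satisfy ε < |arg u| < π − ε. Let δ > 0 and let α_1 ≥ α_2 ≥ … ≥ 0 and β_1 ≥ β_2 ≥ … ≥ 0 satisfy Σ_i (α_i + β_i) ≤ δ. Then there exists a constant C = C(ε) > 0 depending only on ε such that | ∏_{i=1}^∞ (1 + β_i u^{-1}) / (1 − α_i u^{-1}) | ≤ exp( C δ |u^{-1}| ). -/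
/-!
Write `w = u⁻¹` and `c = cos ε` (shrinking `ε` to at most `π / 2`). The condition
`ε < |arg u|` gives `Re w ≤ c ‖w‖`, so with `t = α ‖w‖` we get `‖1 - α w‖² ≥ 1 - 2ct + t²`, a quadratic that stays above `exp (-2t / (1 - c²))`
for `t ≥ 0`. Hence every factor has norm at most `exp ((α + β) ‖w‖ / (1 - c²))`, and the bound
passes from finite partial products to the infinite product.
-/

open Real

theorem norm_tprod_le_exp_tsum {ι R : Type*} [NormedCommRing R] [NormOneClass R]
    {f : ι → R} {g : ι → ℝ} (hg : ∀ i, 0 ≤ g i) (hgs : Summable g)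
    (hfg : ∀ i, ‖f i‖ ≤ exp (g i)) :
    ‖∏' i, f i‖ ≤ exp (∑' i, g i) := by
  have hpartial : ∀ s : Finset ι, ‖∏ i ∈ s, f i‖ ≤ exp (∑' i, g i) := fun s =>
    calc ‖∏ i ∈ s, f i‖ ≤ ∏ i ∈ s, ‖f i‖ := Finset.norm_prod_le s f
      _ ≤ ∏ i ∈ s, exp (g i) := Finset.prod_le_prod (fun i _ => norm_nonneg _) fun i _ => hfg i
      _ = exp (∑ i ∈ s, g i) := (exp_sum s g).symm
      _ ≤ exp (∑' i, g i) := exp_le_exp.2 (hgs.sum_le_tsum s fun i _ => hg i)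
  by_cases hf : Multipliable f
  · exact le_of_tendsto' (Filter.Tendsto.norm hf.hasProd) hpartial
  · rw [tprod_eq_one_of_not_multipliable hf, norm_one]
    exact one_le_exp (tsum_nonneg hg)

theorem exp_neg_le_one_sub_two_mul_add_sq {c t : ℝ} (hc : c ^ 2 < 1) (ht : 0 ≤ t) :
    exp (-(2 * t / (1 - c ^ 2))) ≤ 1 - 2 * c * t + t ^ 2 := by
  have hs : 0 < 1 - c ^ 2 := by linarith
  have hc1 : c < 1 := by nlinarith
  have hc2 : -1 < c := by nlinarith
  -- `(1 - 2ct + t²)(1 - c² + 2t) - (1 - c²)` is `t` times a quadratic in `t` whose discriminant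
  -- `(1 - c² + 4c)² - 16 = -(1 - c)(3 - c)(5 - c)(1 + c)` is negative.
  have hquad : 1 - c ^ 2 ≤ (1 - 2 * c * t + t ^ 2) * (1 - c ^ 2 + 2 * t) := by
    nlinarith [mul_nonneg ht (sq_nonneg (4 * t + (1 - c ^ 2) - 4 * c)),
      mul_nonneg ht (mul_pos (mul_pos (sub_pos.2 hc1) (by linarith : (0 : ℝ) < 3 - c))
        (mul_pos (by linarith : (0 : ℝ) < 5 - c) (by linarith : (0 : ℝ) < 1 + c))).le]
  have hpos : 0 < 1 + 2 * t / (1 - c ^ 2) := by positivity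
  calc exp (-(2 * t / (1 - c ^ 2))) = (exp (2 * t / (1 - c ^ 2)))⁻¹ := exp_neg _
    _ ≤ (1 + 2 * t / (1 - c ^ 2))⁻¹ := by
      gcongr
      linarith [add_one_le_exp (2 * t / (1 - c ^ 2))]
    _ ≤ 1 - 2 * c * t + t ^ 2 := by
      rw [inv_le_iff_one_le_mul₀ hpos, one_add_div hs.ne', mul_div_assoc', le_div_iff₀ hs]
      linarith

theorem Complex.exp_neg_le_norm_one_sub_mul {w : ℂ} {a c : ℝ} (hc : c ^ 2 < 1)
    (hw : w.re ≤ c * ‖w‖) (ha : 0 ≤ a) :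
    Real.exp (-(a * ‖w‖ / (1 - c ^ 2))) ≤ ‖1 - a * w‖ := by
  have hnorm_sq : ‖1 - a * w‖ ^ 2 = 1 - 2 * (a * w.re) + (a * ‖w‖) ^ 2 := by
    rw [Complex.sq_norm, Complex.normSq_apply, mul_pow, Complex.sq_norm, Complex.normSq_apply]
    simp only [Complex.sub_re, Complex.sub_im, Complex.one_re, Complex.one_im,
      Complex.mul_re, Complex.mul_im, Complex.ofReal_re, Complex.ofReal_im]
    ring
  have hre : a * w.re ≤ c * (a * ‖w‖) := by nlinarith
  refine (pow_le_pow_iff_left₀ (exp_pos _).le (norm_nonneg _) two_ne_zero).1 ?_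
  calc Real.exp (-(a * ‖w‖ / (1 - c ^ 2))) ^ 2 = Real.exp (-(2 * (a * ‖w‖) / (1 - c ^ 2))) := by
        rw [← Real.exp_nat_mul]; ring_nf
    _ ≤ 1 - 2 * c * (a * ‖w‖) + (a * ‖w‖) ^ 2 :=
        exp_neg_le_one_sub_two_mul_add_sq hc (by positivity)
    _ ≤ ‖1 - a * w‖ ^ 2 := by rw [hnorm_sq]; linarith

theorem Complex.norm_one_add_mul_div_one_sub_mul_le {w : ℂ} {a b c : ℝ} (hc : c ^ 2 < 1)
    (hw : w.re ≤ c * ‖w‖) (ha : 0 ≤ a) (hb : 0 ≤ b) :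
    ‖(1 + b * w) / (1 - a * w)‖ ≤ Real.exp ((a + b) * ‖w‖ / (1 - c ^ 2)) := by
  have hs : 0 < 1 - c ^ 2 := by linarith
  have hnum : ‖1 + b * w‖ ≤ Real.exp (b * ‖w‖ / (1 - c ^ 2)) :=
    calc ‖1 + b * w‖ ≤ 1 + b * ‖w‖ := by
          simpa [abs_of_nonneg hb] using norm_add_le (1 : ℂ) (b * w)
      _ ≤ Real.exp (b * ‖w‖) := by linarith [add_one_le_exp (b * ‖w‖)]
      _ ≤ Real.exp (b * ‖w‖ / (1 - c ^ 2)) := by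
          gcongr
          exact le_div_self (by positivity) hs (by nlinarith)
  calc ‖(1 + b * w) / (1 - a * w)‖
      ≤ Real.exp (b * ‖w‖ / (1 - c ^ 2)) / Real.exp (-(a * ‖w‖ / (1 - c ^ 2))) := by
        rw [norm_div]
        exact div_le_div₀ (exp_pos _).le hnum (exp_pos _)
          (Complex.exp_neg_le_norm_one_sub_mul hc hw ha)
    _ = Real.exp ((a + b) * ‖w‖ / (1 - c ^ 2)) := by rw [← Real.exp_sub]; ring_nf

theorem Complex.re_inv_le_cos_mul_norm_inv {u : ℂ} {θ : ℝ} (hθ : 0 ≤ θ) (h : θ ≤ |arg u|) :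
    (u⁻¹).re ≤ Real.cos θ * ‖u⁻¹‖ := by
  rcases eq_or_ne u 0 with rfl | hu
  · simp
  have hre : (u⁻¹).re = Real.cos (arg u) * ‖u⁻¹‖ := by
    rw [Complex.inv_re, Complex.normSq_eq_norm_sq, ← Complex.norm_mul_cos_arg, norm_inv]
    field_simp [norm_ne_zero_iff.2 hu]
  rw [hre, ← cos_abs (arg u)]
  gcongr
  exact cos_le_cos_of_nonneg_of_le_pi hθ (Complex.abs_arg_le_pi u) h

theorem product_estimate (ε : ℝ) (hε : 0 < ε) :
    ∃ C : ℝ, 0 < C ∧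
      ∀ (u : ℂ) (δ : ℝ) (α β : ℕ → ℝ),
        ε < |Complex.arg u| → |Complex.arg u| < Real.pi - ε →
        0 < δ →
        Antitone α → Antitone β →
        (∀ i, 0 ≤ α i) → (∀ i, 0 ≤ β i) →
        Summable (fun i => α i + β i) →
        (∑' i, (α i + β i)) ≤ δ →
        ‖∏' i : ℕ, (1 + (β i : ℂ) * u⁻¹) / (1 - (α i : ℂ) * u⁻¹)‖ ≤
          Real.exp (C * δ * ‖u⁻¹‖) := by
  -- Truncating at `π / 2` keeps `sin θ > 0` even when `ε ≥ π`.
  set θ := min ε (π / 2)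
  have hθ : 0 < θ := lt_min hε (by positivity)
  have hc : cos θ ^ 2 < 1 := by
    nlinarith [sin_sq_add_cos_sq θ, sin_pos_of_pos_of_lt_pi hθ
      ((min_le_right _ _).trans_lt (by linarith [pi_pos]))]
  have hs : 0 < 1 - cos θ ^ 2 := by linarith
  refine ⟨(1 - cos θ ^ 2)⁻¹, inv_pos.2 hs, ?_⟩
  intro u δ α β harg _ _ _ _ hα hβ hsum hle
  have hw : (u⁻¹).re ≤ cos θ * ‖u⁻¹‖ :=
    Complex.re_inv_le_cos_mul_norm_inv hθ.le ((min_le_left _ _).trans harg.le)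
  calc _ ≤ exp (∑' i, (α i + β i) * ‖u⁻¹‖ / (1 - cos θ ^ 2)) :=
        norm_tprod_le_exp_tsum
          (fun i => div_nonneg (mul_nonneg (add_nonneg (hα i) (hβ i)) (norm_nonneg _)) hs.le)
          ((hsum.mul_right _).div_const _)
          fun i => Complex.norm_one_add_mul_div_one_sub_mul_le hc hw (hα i) (hβ i)
    _ ≤ exp ((1 - cos θ ^ 2)⁻¹ * δ * ‖u⁻¹‖) := by
        rw [tsum_div_const, tsum_mul_right, div_eq_inv_mul, ← mul_assoc]
        gcongr
end

section
/- Residue of the Gauss hypergeometric function at non-positive integer values of the parameter c: for a, b ∈ ℂ, n ∈ ℤ_{≥0}, and ζ ∈ ℂ with |ζ| < 1, the function c ↦ F(a,b;c;ζ) = Σ_{k≥0} (a)_k(b)_k ζ^k / ((c)_k k!) is meromorphic with a simple pole at c = −n, and Res_{c=−n} F(a,b;c;ζ) = (−1)^n ζ^{n+1} (a)_{n+1}(b)_{n+1} / (n! (n+1)!) · F(a+n+1, b+n+1; n+2; ζ). -/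
/-!
STATEMENT 16: residue of the Gauss hypergeometric function at c = −n:
Res_{c=−n} F(a,b;c;ζ)
  = (−1)^n ζ^{n+1} (a)_{n+1}(b)_{n+1} / (n!(n+1)!) · F(a+n+1,b+n+1;n+2;ζ).
The residue of the simple pole is expressed as the limit of (c+n)·F(a,b;c;ζ)
as c → −n (along c ≠ −n).
-/

open Filter Topology

noncomputable section

/-- The Pochhammer symbol `(a)_k`. -/
def pochC (a : ℂ) (k : ℕ) : ℂ := (ascPochhammer ℂ k).eval a

/-- The Gauss hypergeometric series `F(a,b;c;ζ) = Σ_k (a)_k (b)_k ζ^k /((c)_k k!)`. -/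
def gaussF (a b c ζ : ℂ) : ℂ :=
  ∑' k : ℕ, pochC a k * pochC b k * ζ ^ k / (pochC c k * (k.factorial : ℂ))

/-!
For `k ≤ n` the `k`-th term of `F(a,b;c;ζ)` is continuous at `c = -n`, so multiplied by `c + n`
it tends to `0`. For `k = n + 1 + m` the factor `c + n` of `(c)_k` cancels against the prefactor,
leaving a term continuous at `-n`. On `‖c + n‖ ≤ 1/2` these terms are dominated by a constant times
the terms of the real series `F(‖a+n+1‖, ‖b+n+1‖; 1/2; ‖ζ‖)`, which converges because `‖ζ‖ < 1`,
so by dominated convergence their sum is continuous at `-n`. Its value there is the residue, since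
`(-n)_n = (-1)^n n!` and `(n+1+m)! = (n+1)! (n+2)_m`.
-/

open Finset Nat

theorem ascPochhammer_eval_eq_prod {S : Type*} [CommSemiring S] (x : S) (k : ℕ) :
    (ascPochhammer S k).eval x = ∏ j ∈ range k, (x + j) := by
  induction k with
  | zero => simp
  | succ k ih => rw [ascPochhammer_succ_eval, ih, prod_range_succ]

theorem ascPochhammer_eval_nonneg {S : Type*} [CommSemiring S] [PartialOrder S] [IsOrderedRing S]
    {s : S} (hs : 0 ≤ s) (k : ℕ) : 0 ≤ (ascPochhammer S k).eval s := by
  rw [ascPochhammer_eval_eq_prod]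
  exact prod_nonneg fun j _ => by positivity

theorem ascPochhammer_eval_le_eval {S : Type*} [CommSemiring S] [PartialOrder S]
    [IsOrderedRing S] {s t : S} (hs : 0 ≤ s) (hst : s ≤ t) (k : ℕ) :
    (ascPochhammer S k).eval s ≤ (ascPochhammer S k).eval t := by
  simp only [ascPochhammer_eval_eq_prod]
  exact prod_le_prod (fun j _ => by positivity) fun j _ => add_le_add_left hst _

theorem pochC_add (x : ℂ) (n m : ℕ) : pochC x (n + m) = pochC x n * pochC (x + n) m := by
  simp only [pochC, ← ascPochhammer_mul ℂ n m, Polynomial.eval_mul, Polynomial.eval_comp,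
    Polynomial.eval_add, Polynomial.eval_X, Polynomial.eval_natCast]

theorem pochC_succ_add (x : ℂ) (n m : ℕ) :
    pochC x (n + 1 + m) = pochC x (n + 1) * pochC (x + n + 1) m := by
  rw [pochC_add, Nat.cast_succ, ← add_assoc]

theorem pochC_succ (x : ℂ) (n : ℕ) : pochC x (n + 1) = pochC x n * (x + n) :=
  ascPochhammer_succ_eval n x

theorem pochC_one (m : ℕ) : pochC 1 m = m ! :=
  ascPochhammer_eval_one ℂ m

theorem pochC_neg_natCast_self (n : ℕ) : pochC (-n) n = (-1) ^ n * n ! := by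
  rw [pochC, ascPochhammer_eval_neg_eq_descPochhammer, descPochhammer_eval_eq_descFactorial,
    Nat.descFactorial_self]

theorem pochC_neg_natCast_ne_zero {n k : ℕ} (hk : k ≤ n) : pochC (-n) k ≠ 0 := by
  rw [pochC, Ne, ascPochhammer_eval_eq_zero_iff]
  rintro ⟨j, hj, h⟩
  rw [neg_neg, Nat.cast_inj] at h
  omega

theorem factorial_add_eq_mul_pochC (n m : ℕ) : ((n + m)! : ℂ) = n ! * pochC (n + 1) m :=
  (factorial_mul_ascPochhammer ℂ n m).symm

@[fun_prop]
theorem continuous_pochC (k : ℕ) : Continuous fun x => pochC x k :=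
  (ascPochhammer ℂ k).continuous

theorem norm_pochC_le (x : ℂ) (k : ℕ) : ‖pochC x k‖ ≤ (ascPochhammer ℝ k).eval ‖x‖ := by
  rw [pochC, ascPochhammer_eval_eq_prod, ascPochhammer_eval_eq_prod, norm_prod]
  refine prod_le_prod (fun j _ => norm_nonneg _) fun j _ => ?_
  simpa using norm_add_le x j

theorem half_pow_le_norm_pochC {c : ℂ} {n : ℕ} (hc : ‖c + n‖ ≤ 1 / 2) :
    (1 / 2 : ℝ) ^ n ≤ ‖pochC c n‖ := by
  rw [pochC, ascPochhammer_eval_eq_prod, norm_prod,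
    show (1 / 2 : ℝ) ^ n = ∏ _j ∈ range n, 1 / 2 by simp]
  refine prod_le_prod (fun j _ => by positivity) fun j hj => ?_
  have hnj : (1 : ℝ) ≤ ‖((n - j : ℕ) : ℂ)‖ := by
    rw [Complex.norm_natCast, Nat.one_le_cast]
    have := mem_range.mp hj
    omega
  have : c + j = (c + n) - ((n - j : ℕ) : ℂ) := by
    rw [Nat.cast_sub (mem_range.mp hj).le]; ring
  rw [this]
  linarith [norm_sub_norm_le (((n - j : ℕ) : ℂ)) (c + n), norm_sub_rev (c + n) ((n - j : ℕ) : ℂ)]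

theorem ascPochhammer_half_le_norm_pochC {c : ℂ} {n : ℕ} (hc : ‖c + n‖ ≤ 1 / 2) (m : ℕ) :
    (ascPochhammer ℝ m).eval (1 / 2) ≤ ‖pochC (c + n + 1) m‖ := by
  rw [pochC, ascPochhammer_eval_eq_prod, ascPochhammer_eval_eq_prod, norm_prod]
  refine prod_le_prod (fun j _ => by positivity) fun j _ => ?_
  have hj : ‖((j + 1 : ℕ) : ℂ)‖ = j + 1 := by rw [Complex.norm_natCast]; push_cast; ring
  have : c + n + 1 + j = ((j + 1 : ℕ) : ℂ) + (c + n) := by push_cast; ring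
  have h := norm_sub_le (((j + 1 : ℕ) : ℂ) + (c + n)) (c + n)
  rw [add_sub_cancel_right] at h
  rw [this]
  linarith

def gaussTerm {𝕜 : Type*} [Field 𝕜] (a b c z : 𝕜) (k : ℕ) : 𝕜 :=
  (ascPochhammer 𝕜 k).eval a * (ascPochhammer 𝕜 k).eval b * z ^ k /
    ((ascPochhammer 𝕜 k).eval c * k !)

theorem gaussF_eq_tsum_gaussTerm (a b c ζ : ℂ) : gaussF a b c ζ = ∑' k, gaussTerm a b c ζ k := rfl

theorem gaussTerm_eq_pochC (a b c ζ : ℂ) (k : ℕ) :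
    gaussTerm a b c ζ k = pochC a k * pochC b k * ζ ^ k / (pochC c k * k !) := rfl

theorem gaussTerm_nonneg {α β γ r : ℝ} (hα : 0 ≤ α) (hβ : 0 ≤ β) (hγ : 0 ≤ γ) (hr : 0 ≤ r)
    (m : ℕ) : 0 ≤ gaussTerm α β γ r m := by
  have := ascPochhammer_eval_nonneg hα m
  have := ascPochhammer_eval_nonneg hβ m
  have := ascPochhammer_eval_nonneg hγ m
  unfold gaussTerm
  positivity

theorem summable_gaussTerm {α β γ r : ℝ} (hα : 0 ≤ α) (hβ : 0 ≤ β) (hγ : 0 < γ) (hr : 0 ≤ r)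
    (hr1 : r < 1) : Summable (gaussTerm α β γ r) := by
  -- Mathlib's radius-one theorem excludes the parameter `0`, hence the comparison with `α + 1`.
  set p := ordinaryHypergeometricSeries ℝ (α + 1) (β + 1) γ
  have hparam : ∀ s : ℝ, 0 < s → ∀ k : ℕ, (k : ℝ) ≠ -s := fun s hs k => by
    have := k.cast_nonneg (α := ℝ)
    linarith
  have hradius : p.radius = 1 := ordinaryHypergeometricSeries_radius_eq_one ℝ _ _ _ fun k =>
    ⟨hparam _ (by positivity) k, hparam _ (by positivity) k, hparam γ hγ k⟩
  have hp : Summable fun m => ‖p m fun _ => r‖ :=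
    p.summable_norm_apply (by
      rw [Metric.mem_eball, edist_zero_right, hradius, ← ofReal_norm, ENNReal.ofReal_lt_one,
        Real.norm_of_nonneg hr]
      exact hr1)
  refine hp.of_nonneg_of_le (gaussTerm_nonneg hα hβ hγ.le hr) fun m => ?_
  have := ascPochhammer_pos m γ hγ
  have := ascPochhammer_eval_nonneg hβ m
  have := ascPochhammer_eval_nonneg (by positivity : 0 ≤ α + 1) m
  have := ascPochhammer_eval_le_eval hα (le_add_of_nonneg_right zero_le_one) m
  have := ascPochhammer_eval_le_eval hβ (le_add_of_nonneg_right zero_le_one) m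
  calc gaussTerm α β γ r m ≤ gaussTerm (α + 1) (β + 1) γ r m := by unfold gaussTerm; gcongr
    _ = p m fun _ => r := by
      rw [ordinaryHypergeometricSeries_apply_eq, smul_eq_mul, gaussTerm]; ring
    _ ≤ ‖p m fun _ => r‖ := Real.le_norm_self _

/-- `(c + n) * gaussTerm a b c ζ (n + 1 + m)` with the factor `c + n` cancelled from
`(c)_{n+1+m}`. -/
def residueTerm (a b ζ : ℂ) (n : ℕ) (c : ℂ) (m : ℕ) : ℂ :=
  pochC a (n + 1 + m) * pochC b (n + 1 + m) * ζ ^ (n + 1 + m) /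
    (pochC c n * pochC (c + n + 1) m * (n + 1 + m)!)

section Residue

variable (a b ζ : ℂ) (n : ℕ)

theorem mul_gaussTerm_add_eq_residueTerm {c : ℂ} (hc : c + n ≠ 0) (m : ℕ) :
    (c + n) * gaussTerm a b c ζ (m + (n + 1)) = residueTerm a b ζ n c m := by
  have hsplit : pochC c (n + 1 + m) = (c + n) * (pochC c n * pochC (c + n + 1) m) := by
    rw [pochC_succ_add, pochC_succ]; ring
  rw [gaussTerm_eq_pochC, residueTerm, add_comm m, hsplit, mul_assoc (c + n), ← mul_div_assoc,
    mul_div_mul_left _ _ hc]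

theorem tendsto_mul_gaussTerm_of_le {k : ℕ} (hk : k ≤ n) :
    Tendsto (fun c => (c + n) * gaussTerm a b c ζ k) (𝓝 (-n)) (𝓝 0) := by
  have hden : pochC (-n) k * k ! ≠ 0 :=
    mul_ne_zero (pochC_neg_natCast_ne_zero hk) (Nat.cast_ne_zero.mpr k.factorial_ne_zero)
  have hterm : ContinuousAt (fun c => gaussTerm a b c ζ k) (-n) := by
    simp only [gaussTerm_eq_pochC]
    exact continuousAt_const.div (((continuous_pochC k).mul continuous_const).continuousAt) hden
  simpa using ((continuous_add_const (n : ℂ)).tendsto (-n)).mul hterm.tendsto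

theorem continuousAt_residueTerm (m : ℕ) :
    ContinuousAt (fun c => residueTerm a b ζ n c m) (-n) := by
  have hden : pochC (-n) n * pochC (-n + n + 1) m * ((n + 1 + m)! : ℂ) ≠ 0 := by
    rw [neg_add_cancel, zero_add, pochC_one]
    exact mul_ne_zero (mul_ne_zero (pochC_neg_natCast_ne_zero le_rfl)
      (Nat.cast_ne_zero.mpr m.factorial_ne_zero))
      (Nat.cast_ne_zero.mpr (n + 1 + m).factorial_ne_zero)
  refine continuousAt_const.div (Continuous.continuousAt ?_) hden
  fun_prop

theorem residueTerm_neg_natCast (m : ℕ) :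
    residueTerm a b ζ n (-n) m = (-1) ^ n * ζ ^ (n + 1) * pochC a (n + 1) * pochC b (n + 1) /
      (n ! * (n + 1)!) * gaussTerm (a + n + 1) (b + n + 1) (n + 2) ζ m := by
  have h2 : ((n + 1 : ℕ) : ℂ) + 1 = n + 2 := by push_cast; ring
  rw [residueTerm, gaussTerm_eq_pochC, pochC_succ_add a, pochC_succ_add b, pow_add,
    neg_add_cancel, zero_add, pochC_one, pochC_neg_natCast_self, factorial_add_eq_mul_pochC, h2]
  field_simp
  rw [← pow_mul, Even.neg_one_pow ⟨n, by ring⟩, mul_one]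

theorem norm_residueTerm_le {c : ℂ} (hc : ‖c + n‖ ≤ 1 / 2) (m : ℕ) :
    ‖residueTerm a b ζ n c m‖ ≤ 2 ^ n * ‖pochC a (n + 1)‖ * ‖pochC b (n + 1)‖ * ‖ζ‖ ^ (n + 1) *
      gaussTerm ‖a + n + 1‖ ‖b + n + 1‖ (1 / 2) ‖ζ‖ m := by
  have hfac : (m ! : ℝ) ≤ (n + 1 + m)! := by exact_mod_cast Nat.factorial_le (by omega)
  have := ascPochhammer_pos m (1 / 2 : ℝ) (by norm_num)
  have := ascPochhammer_eval_nonneg (norm_nonneg (a + n + 1)) m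
  have := ascPochhammer_eval_nonneg (norm_nonneg (b + n + 1)) m
  calc ‖residueTerm a b ζ n c m‖
      = ‖pochC a (n + 1)‖ * ‖pochC b (n + 1)‖ * ‖ζ‖ ^ (n + 1) *
          (‖pochC (a + n + 1) m‖ * ‖pochC (b + n + 1) m‖ * ‖ζ‖ ^ m) /
          (‖pochC c n‖ * (‖pochC (c + n + 1) m‖ * (n + 1 + m)!)) := by
        rw [residueTerm, pochC_succ_add a, pochC_succ_add b]
        simp only [norm_div, norm_mul, norm_pow, pow_add, Complex.norm_natCast]
        ring
    _ ≤ ‖pochC a (n + 1)‖ * ‖pochC b (n + 1)‖ * ‖ζ‖ ^ (n + 1) *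
          ((ascPochhammer ℝ m).eval ‖a + n + 1‖ * (ascPochhammer ℝ m).eval ‖b + n + 1‖ * ‖ζ‖ ^ m) /
          ((1 / 2) ^ n * ((ascPochhammer ℝ m).eval (1 / 2) * m !)) := by
        gcongr
        · exact norm_pochC_le _ _
        · exact norm_pochC_le _ _
        · exact half_pow_le_norm_pochC hc
        · exact ascPochhammer_half_le_norm_pochC hc m
    _ = _ := by
        rw [gaussTerm]
        field_simp
        rw [mul_assoc _ ((1 / 2 : ℝ) ^ n), ← mul_pow]
        norm_num

theorem eventually_norm_add_le_half : ∀ᶠ c : ℂ in 𝓝 (-n), ‖c + n‖ ≤ 1 / 2 := by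
  filter_upwards [Metric.closedBall_mem_nhds (-(n : ℂ)) (by norm_num : (0 : ℝ) < 1 / 2)] with c hc
  rwa [Metric.mem_closedBall, dist_eq_norm, sub_neg_eq_add] at hc

variable {ζ}

theorem summable_residueTerm_majorant (hζ : ‖ζ‖ < 1) :
    Summable fun m : ℕ => (2 : ℝ) ^ n * ‖pochC a (n + 1)‖ * ‖pochC b (n + 1)‖ * ‖ζ‖ ^ (n + 1) *
      gaussTerm ‖a + n + 1‖ ‖b + n + 1‖ (1 / 2) ‖ζ‖ m :=
  (summable_gaussTerm (norm_nonneg _) (norm_nonneg _) (by norm_num) (norm_nonneg _) hζ).mul_left _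

theorem tendsto_tsum_residueTerm (hζ : ‖ζ‖ < 1) :
    Tendsto (fun c => ∑' m, residueTerm a b ζ n c m) (𝓝 (-n))
      (𝓝 (∑' m, residueTerm a b ζ n (-n) m)) :=
  tendsto_tsum_of_dominated_convergence (summable_residueTerm_majorant a b n hζ)
    (fun m => continuousAt_residueTerm a b ζ n m)
    ((eventually_norm_add_le_half n).mono fun _ hc => norm_residueTerm_le a b ζ n hc)

theorem mul_gaussF_eq_sum_add_tsum_residueTerm (hζ : ‖ζ‖ < 1) {c : ℂ} (hc : ‖c + n‖ ≤ 1 / 2)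
    (hne : c + n ≠ 0) :
    (c + n) * gaussF a b c ζ =
      ∑ k ∈ range (n + 1), (c + n) * gaussTerm a b c ζ k + ∑' m, residueTerm a b ζ n c m := by
  have htail : (fun m => (c + n) * gaussTerm a b c ζ (m + (n + 1))) = residueTerm a b ζ n c :=
    funext (mul_gaussTerm_add_eq_residueTerm a b ζ n hne)
  have hsum : Summable (residueTerm a b ζ n c) :=
    (summable_residueTerm_majorant a b n hζ).of_norm_bounded (norm_residueTerm_le a b ζ n hc)
  rw [← htail] at hsum ⊢
  rw [gaussF_eq_tsum_gaussTerm, ← tsum_mul_left,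
    ((summable_nat_add_iff (f := fun k => (c + n) * gaussTerm a b c ζ k) (n + 1)).mp
      hsum).sum_add_tsum_nat_add]

end Residue

theorem gaussF_residue (a b ζ : ℂ) (hζ : ‖ζ‖ < 1) (n : ℕ) :
    Tendsto (fun c : ℂ => (c + (n : ℂ)) * gaussF a b c ζ)
      (𝓝[≠] (-(n : ℂ)))
      (𝓝 ((-1 : ℂ) ^ n * ζ ^ (n + 1) * pochC a (n + 1) * pochC b (n + 1) /
        ((n.factorial : ℂ) * ((n + 1).factorial : ℂ)) *
        gaussF (a + n + 1) (b + n + 1) ((n : ℂ) + 2) ζ)) := by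
  have hdecomp : ∀ᶠ c in 𝓝[≠] (-(n : ℂ)),
      ∑ k ∈ range (n + 1), (c + n) * gaussTerm a b c ζ k + ∑' m, residueTerm a b ζ n c m =
        (c + n) * gaussF a b c ζ := by
    filter_upwards [nhdsWithin_le_nhds (eventually_norm_add_le_half n), self_mem_nhdsWithin]
      with c hc hne
    exact (mul_gaussF_eq_sum_add_tsum_residueTerm a b n hζ hc
      (fun h => hne (eq_neg_of_add_eq_zero_left h))).symm
  have hhead : Tendsto (fun c => ∑ k ∈ range (n + 1), (c + n) * gaussTerm a b c ζ k)
      (𝓝 (-(n : ℂ))) (𝓝 0) := by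
    simpa using tendsto_finsetSum _ fun k hk =>
      tendsto_mul_gaussTerm_of_le a b ζ n (mem_range_succ_iff.mp hk)
  have htail := tendsto_tsum_residueTerm a b n hζ
  rw [tsum_congr (residueTerm_neg_natCast a b ζ n), tsum_mul_left,
    ← gaussF_eq_tsum_gaussTerm] at htail
  simpa using ((hhead.add htail).mono_left nhdsWithin_le_nhds).congr' hdecomp
end
end
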